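/- Coercivity of the O(h⁵) Cosserat shell energy density: Assume μ > 0, μ_c > 0, 2λ+μ > 0, λ+2μ > 0, b₁, b₂, b₃ > 0, and h > 0, H, K ∈ ℝ with h²|K| < 1/4 and 2h|H| < 1. Let W_shell, W_curv be positive definite quadratic forms on ℝ^{3×3} with W_shell(S) ≥ c₁‖S‖², W_curv(S) ≥ c₂‖S‖² (c₁, c₂ > 0), 𝒲_shell the bilinear form of W_shell, and W_mp ≥ W_shell. Then for any fixed matrices B, C ∈ ℝ^{3×3} and all E, K_e ∈ ℝ^{3×3}, the expression W = (h + K h³/12)W_shell(E) + (h³/12 − K h⁵/80)W_shell(EB + CK_e) − (h³/3)H·𝒲_shell(E, EB + CK_e) + (h³/6)𝒲_shell(E, (EB + CK_e)B) + (h⁵/80)W_mp((EB + CK_e)B) + (h − K h³/12)W_curv(K_e) satisfies W ≥ a(‖E‖² + ‖K_e‖²) with a = min{(7h/48)c₁, (47h/48)c₂} > 0. -/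
import Mathlib


open Matrix

noncomputable def frobInner (A B : Matrix (Fin 3) (Fin 3) ℝ) : ℝ := Matrix.trace (A * Bᵀ)

noncomputable def frobSq (X : Matrix (Fin 3) (Fin 3) ℝ) : ℝ := Matrix.trace (X * Xᵀ)

noncomputable def symPart (X : Matrix (Fin 3) (Fin 3) ℝ) : Matrix (Fin 3) (Fin 3) ℝ :=
  (1 / 2 : ℝ) • (X + Xᵀ)

noncomputable def skewPart (X : Matrix (Fin 3) (Fin 3) ℝ) : Matrix (Fin 3) (Fin 3) ℝ :=
  (1 / 2 : ℝ) • (X - Xᵀ)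

noncomputable def devSymPart (X : Matrix (Fin 3) (Fin 3) ℝ) : Matrix (Fin 3) (Fin 3) ℝ :=
  symPart X - ((Matrix.trace X) / 3) • (1 : Matrix (Fin 3) (Fin 3) ℝ)

/-- `W_shell(S) = μ‖sym S‖² + μ_c‖skew S‖² + (λμ/(λ+2μ))(tr S)²` -/
noncomputable def Wshell (μ μc lam : ℝ) (S : Matrix (Fin 3) (Fin 3) ℝ) : ℝ :=
  μ * frobSq (symPart S) + μc * frobSq (skewPart S)
    + (lam * μ / (lam + 2 * μ)) * (Matrix.trace S) ^ 2

/-- polarization of `W_shell` -/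
noncomputable def Wshellbil (μ μc lam : ℝ) (S T : Matrix (Fin 3) (Fin 3) ℝ) : ℝ :=
  μ * frobInner (symPart S) (symPart T) + μc * frobInner (skewPart S) (skewPart T)
    + (lam * μ / (lam + 2 * μ)) * (Matrix.trace S) * (Matrix.trace T)

/-- `W_mp(S) = W_shell(S) + (λ²/(2(λ+2μ)))(tr S)²` -/
noncomputable def Wmp (μ μc lam : ℝ) (S : Matrix (Fin 3) (Fin 3) ℝ) : ℝ :=
  Wshell μ μc lam S + (lam ^ 2 / (2 * (lam + 2 * μ))) * (Matrix.trace S) ^ 2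

/-- `W_curv(S) = μL_c²(b₁‖dev sym S‖² + b₂‖skew S‖² + b₃(tr S)²)` -/
noncomputable def Wcurv (μ Lc b1 b2 b3 : ℝ) (S : Matrix (Fin 3) (Fin 3) ℝ) : ℝ :=
  μ * Lc ^ 2 * (b1 * frobSq (devSymPart S) + b2 * frobSq (skewPart S)
    + b3 * (Matrix.trace S) ^ 2)

lemma frobSq_nonneg (X : Matrix (Fin 3) (Fin 3) ℝ) : 0 ≤ frobSq X := by
  unfold frobSq
  simp only [Matrix.trace, Matrix.diag, Matrix.mul_apply, Matrix.transpose_apply]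
  apply Finset.sum_nonneg; intro i _
  apply Finset.sum_nonneg; intro j _
  exact mul_self_nonneg _

lemma frobInner_comm (A B : Matrix (Fin 3) (Fin 3) ℝ) : frobInner A B = frobInner B A := by
  unfold frobInner
  rw [← Matrix.trace_transpose (A * Bᵀ), Matrix.transpose_mul, Matrix.transpose_transpose]

lemma frobSq_expand (a : ℝ) (X Y : Matrix (Fin 3) (Fin 3) ℝ) :
    frobSq (a • X + Y) = a ^ 2 * frobSq X + 2 * a * frobInner X Y + frobSq Y := by
  have hsym : Matrix.trace (Y * Xᵀ) = Matrix.trace (X * Yᵀ) := by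
    rw [← Matrix.trace_transpose (Y * Xᵀ), Matrix.transpose_mul, Matrix.transpose_transpose]
  unfold frobSq frobInner
  rw [Matrix.transpose_add, Matrix.transpose_smul, Matrix.add_mul, Matrix.mul_add,
    Matrix.mul_add, Matrix.smul_mul, Matrix.mul_smul, Matrix.mul_smul,
    Matrix.trace_add, Matrix.trace_add, Matrix.trace_add, Matrix.trace_smul,
    Matrix.trace_smul, Matrix.trace_smul, hsym]
  simp [smul_eq_mul]; ring

lemma symPart_smul_add (a : ℝ) (S T : Matrix (Fin 3) (Fin 3) ℝ) :
    symPart (a • S + T) = a • symPart S + symPart T := by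
  unfold symPart
  rw [Matrix.transpose_add, Matrix.transpose_smul]
  ext i j
  simp [Matrix.add_apply, Matrix.smul_apply, smul_eq_mul]
  ring

lemma skewPart_smul_add (a : ℝ) (S T : Matrix (Fin 3) (Fin 3) ℝ) :
    skewPart (a • S + T) = a • skewPart S + skewPart T := by
  unfold skewPart
  rw [Matrix.transpose_add, Matrix.transpose_smul]
  ext i j
  simp [Matrix.sub_apply, Matrix.add_apply, Matrix.smul_apply, smul_eq_mul]
  ring

lemma trace_smul_add (a : ℝ) (S T : Matrix (Fin 3) (Fin 3) ℝ) :
    Matrix.trace (a • S + T) = a * Matrix.trace S + Matrix.trace T := by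
  simp [Matrix.trace_add, Matrix.trace_smul, smul_eq_mul]

lemma Wshell_expand (μ μc lam a : ℝ) (S T : Matrix (Fin 3) (Fin 3) ℝ) :
    Wshell μ μc lam (a • S + T) =
      a ^ 2 * Wshell μ μc lam S + 2 * a * Wshellbil μ μc lam S T + Wshell μ μc lam T := by
  unfold Wshell Wshellbil
  rw [symPart_smul_add, skewPart_smul_add, trace_smul_add, frobSq_expand, frobSq_expand]
  ring

lemma Wshell_CS (μ μc lam : ℝ) (hpos : ∀ S, 0 ≤ Wshell μ μc lam S)
    (S T : Matrix (Fin 3) (Fin 3) ℝ) :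
    (Wshellbil μ μc lam S T) ^ 2 ≤ Wshell μ μc lam S * Wshell μ μc lam T := by
  set qS := Wshell μ μc lam S with hqS
  set qT := Wshell μ μc lam T with hqT
  set b := Wshellbil μ μc lam S T with hb
  by_cases hz : qS = 0
  · have hb0 : b = 0 := by
      by_contra hb0
      have hbb : 0 < b ^ 2 := by positivity
      have h1 := hpos ((-(qT + 1) / (2 * b)) • S + T)
      rw [Wshell_expand] at h1
      rw [← hqS, ← hqT, ← hb, hz] at h1
      have h2b : (2 : ℝ) * b ≠ 0 := by
        intro hc; apply hb0; linarith [mul_eq_zero.mp hc]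
      have hbne : b ≠ 0 := hb0
      have hcalc : 2 * (-(qT + 1) / (2 * b)) * b = -(qT + 1) := by
        field_simp
      rw [hcalc] at h1
      linarith
    rw [hb0]
    nlinarith [hpos S, hpos T]
  · have hq : 0 < qS := lt_of_le_of_ne (hpos S) (Ne.symm hz)
    have h1 := hpos ((-b / qS) • S + T)
    rw [Wshell_expand, ← hqS, ← hqT, ← hb] at h1
    have hrw : (-b / qS) ^ 2 * qS + 2 * (-b / qS) * b + qT = qT - b ^ 2 / qS := by
      field_simp; ring
    rw [hrw] at h1
    have := (div_le_iff₀ hq).mp (by linarith : b ^ 2 / qS ≤ qT)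
    linarith [this]

lemma Wshell_absorb (μ μc lam : ℝ) (hpos : ∀ S, 0 ≤ Wshell μ μc lam S)
    (S T : Matrix (Fin 3) (Fin 3) ℝ) (e x y : ℝ)
    (hx : 0 ≤ x) (hy : 0 ≤ y) (he : e ^ 2 ≤ 4 * x * y) :
    |e * Wshellbil μ μc lam S T| ≤ x * Wshell μ μc lam S + y * Wshell μ μc lam T := by
  set qS := Wshell μ μc lam S with hqS
  set qT := Wshell μ μc lam T with hqT
  set b := Wshellbil μ μc lam S T with hb
  have hcs := Wshell_CS μ μc lam hpos S T
  rw [← hqS, ← hqT, ← hb] at hcs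
  have hS := hpos S; have hT := hpos T
  rw [← hqS] at hS; rw [← hqT] at hT
  have hR : 0 ≤ x * qS + y * qT := by positivity
  refine abs_le_of_sq_le_sq ?_ hR
  nlinarith [sq_nonneg b, sq_nonneg (x * qS - y * qT),
    mul_nonneg (mul_nonneg hx hy) (sub_nonneg.mpr hcs),
    mul_nonneg (by nlinarith : (0:ℝ) ≤ 4 * x * y - e ^ 2) (sq_nonneg b)]

set_option maxHeartbeats 1000000 in
/-- Coercivity of the `O(h⁵)` Cosserat shell energy density. -/
theorem Oh5_coercivity (μ μc lam b1 b2 b3 Lc h H K c1 c2 : ℝ)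
    (hμ : 0 < μ) (hμc : 0 < μc) (h2lm : 0 < 2 * lam + μ) (hl2m : 0 < lam + 2 * μ)
    (hb1 : 0 < b1) (hb2 : 0 < b2) (hb3 : 0 < b3) (hLc : 0 < Lc)
    (hh : 0 < h) (hK : h ^ 2 * |K| < 1 / 4) (hH : 2 * h * |H| < 1)
    (hc1 : 0 < c1) (hc2 : 0 < c2)
    (hWshell : ∀ S, Wshell μ μc lam S ≥ c1 * frobSq S)
    (hWcurv : ∀ S, Wcurv μ Lc b1 b2 b3 S ≥ c2 * frobSq S)
    (B C : Matrix (Fin 3) (Fin 3) ℝ) :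
    ∀ E Ke : Matrix (Fin 3) (Fin 3) ℝ,
      (h + K * h ^ 3 / 12) * Wshell μ μc lam E
        + (h ^ 3 / 12 - K * h ^ 5 / 80) * Wshell μ μc lam (E * B + C * Ke)
        - (h ^ 3 / 3) * H * Wshellbil μ μc lam E (E * B + C * Ke)
        + (h ^ 3 / 6) * Wshellbil μ μc lam E ((E * B + C * Ke) * B)
        + (h ^ 5 / 80) * Wmp μ μc lam ((E * B + C * Ke) * B)
        + (h - K * h ^ 3 / 12) * Wcurv μ Lc b1 b2 b3 Ke
      ≥ min (7 * h / 48 * c1) (47 * h / 48 * c2) * (frobSq E + frobSq Ke) := by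
  intro E Ke
  set F : Matrix (Fin 3) (Fin 3) ℝ := E * B + C * Ke with hF
  set G : Matrix (Fin 3) (Fin 3) ℝ := F * B with hG
  have hpos : ∀ S, 0 ≤ Wshell μ μc lam S := fun S =>
    le_trans (mul_nonneg hc1.le (frobSq_nonneg S)) (hWshell S)
  set qE := Wshell μ μc lam E with hqEd
  set qF := Wshell μ μc lam F with hqFd
  set qG := Wshell μ μc lam G with hqGd
  set qK := Wcurv μ Lc b1 b2 b3 Ke with hqKd
  set bEF := Wshellbil μ μc lam E F with hbEFd
  set bEG := Wshellbil μ μc lam E G with hbEGd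
  set nE := frobSq E with hnEd
  set nK := frobSq Ke with hnKd
  have hWmpG : qG ≤ Wmp μ μc lam G := by
    rw [Wmp]
    have : 0 ≤ lam ^ 2 / (2 * (lam + 2 * μ)) * (Matrix.trace G) ^ 2 :=
      mul_nonneg (div_nonneg (sq_nonneg _) (by linarith)) (sq_nonneg _)
    linarith
  set wG := Wmp μ μc lam G with hwGd
  have hqE0 : 0 ≤ qE := hpos E
  have hqF0 : 0 ≤ qF := hpos F
  have hqG0 : 0 ≤ qG := hpos G
  have hnE0 : 0 ≤ nE := frobSq_nonneg E
  have hnK0 : 0 ≤ nK := frobSq_nonneg Ke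
  have hqEc : c1 * nE ≤ qE := hWshell E
  have hqKc : c2 * nK ≤ qK := hWcurv Ke
  have hqK0 : 0 ≤ qK := le_trans (mul_nonneg hc2.le hnK0) hqKc
  clear_value qE qF qG qK bEF bEG nE nK wG
  -- bounds on K and H
  have hKabs : |K * h ^ 2| < 1 / 4 := by
    rw [abs_mul, abs_of_nonneg (sq_nonneg h)]; linarith [hK]
  have hK1 : -(1 / 4) < K * h ^ 2 := (abs_lt.mp hKabs).1
  have hK2 : K * h ^ 2 < 1 / 4 := (abs_lt.mp hKabs).2
  have hH1 : h * |H| ≤ 1 / 2 := by linarith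
  -- absorption inequalities
  have A1 : |h ^ 2 / 6 * bEF| ≤ 20 * h / 231 * qE + 77 * h ^ 3 / 960 * qF := by
    have := Wshell_absorb μ μc lam hpos E F (h ^ 2 / 6) (20 * h / 231) (77 * h ^ 3 / 960)
      (by positivity) (by positivity) (le_of_eq (by ring))
    rwa [← hbEFd, ← hqEd, ← hqFd] at this
  have A2 : |h ^ 3 / 6 * bEG| ≤ 5 * h / 9 * qE + h ^ 5 / 80 * qG := by
    have := Wshell_absorb μ μc lam hpos E G (h ^ 3 / 6) (5 * h / 9) (h ^ 5 / 80)
      (by positivity) (by positivity) (le_of_eq (by ring))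
    rwa [← hbEGd, ← hqEd, ← hqGd] at this
  -- cross-term lower bounds
  have key : |h ^ 3 / 3 * H * bEF| ≤ |h ^ 2 / 6 * bEF| := by
    rw [abs_mul, abs_mul, abs_mul, abs_of_nonneg (by positivity : (0:ℝ) ≤ h ^ 3 / 3),
      abs_of_nonneg (by positivity : (0:ℝ) ≤ h ^ 2 / 6)]
    nlinarith [abs_nonneg bEF, mul_nonneg (sq_nonneg h) (by linarith : (0:ℝ) ≤ 1 / 2 - h * |H|),
      mul_nonneg (mul_nonneg (sq_nonneg h) (by linarith : (0:ℝ) ≤ 1 / 2 - h * |H|)) (abs_nonneg bEF)]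
  have T4 : -(h ^ 3 / 3 * H * bEF) ≥ -(20 * h / 231 * qE + 77 * h ^ 3 / 960 * qF) := by
    have h1 := le_abs_self (h ^ 3 / 3 * H * bEF)
    have h2 := neg_abs_le (h ^ 3 / 3 * H * bEF)
    have h3 := abs_le.mp (le_trans key A1)
    linarith [h3.1, h3.2]
  have T5 : h ^ 3 / 6 * bEG ≥ -(5 * h / 9 * qE + h ^ 5 / 80 * qG) := by
    have := neg_abs_le (h ^ 3 / 6 * bEG)
    linarith
  clear hWshell hWcurv hpos hqEd hqFd hqGd hqKd hbEFd hbEGd hnEd hnKd hwGd hKabs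
  clear hG G hF F B C E Ke
  -- coefficient lower bounds
  have T1 : (h + K * h ^ 3 / 12) * qE ≥ 47 * h / 48 * qE := by
    nlinarith [mul_nonneg (mul_nonneg (by positivity : (0:ℝ) ≤ h / 12)
      (by linarith : (0:ℝ) ≤ 1 / 4 + K * h ^ 2)) hqE0]
  have T2 : (h ^ 3 / 12 - K * h ^ 5 / 80) * qF ≥ 77 * h ^ 3 / 960 * qF := by
    nlinarith [mul_nonneg (mul_nonneg (by positivity : (0:ℝ) ≤ h ^ 3 / 80)
      (by linarith : (0:ℝ) ≤ 1 / 4 - K * h ^ 2)) hqF0]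
  have T3 : (h - K * h ^ 3 / 12) * qK ≥ 47 * h / 48 * qK := by
    nlinarith [mul_nonneg (mul_nonneg (by positivity : (0:ℝ) ≤ h / 12)
      (by linarith : (0:ℝ) ≤ 1 / 4 - K * h ^ 2)) hqK0]
  have T6 : h ^ 5 / 80 * wG ≥ h ^ 5 / 80 * qG := by
    nlinarith [mul_nonneg (by positivity : (0:ℝ) ≤ h ^ 5 / 80) (sub_nonneg.mpr hWmpG)]
  -- monotone pieces
  have M1 : 3737 / 11088 * h * qE ≥ 3737 / 11088 * h * (c1 * nE) := by
    nlinarith [mul_nonneg hh.le (sub_nonneg.mpr hqEc)]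
  have M2 : 47 / 48 * h * qK ≥ 47 / 48 * h * (c2 * nK) := by
    nlinarith [mul_nonneg hh.le (sub_nonneg.mpr hqKc)]
  have M3 : min (7 * h / 48 * c1) (47 * h / 48 * c2) * nE ≤ 7 * h / 48 * c1 * nE :=
    mul_le_mul_of_nonneg_right (min_le_left _ _) hnE0
  have M4 : min (7 * h / 48 * c1) (47 * h / 48 * c2) * nK ≤ 47 * h / 48 * c2 * nK :=
    mul_le_mul_of_nonneg_right (min_le_right _ _) hnK0
  have M5 : 7 * h / 48 * c1 * nE ≤ 3737 / 11088 * h * (c1 * nE) := by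
    nlinarith [mul_nonneg (mul_nonneg hh.le hc1.le) hnE0]
  linarith [T1, T2, T3, T4, T5, T6, M1, M2, M3, M4, M5]
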